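/- arXiv:1606.05578 — 2 statements merged into one kernel-verified Lean document; each statement's English description precedes it below -/
import Mathlib

section
/- In the deterministic saddle point setup below, with constant step-size ε = 1/√T, the accumulated objective error satisfies Σ_{t=1}^T (F(x_t) − F(x*)) ≤ (√T/2) (‖x_1 − x*‖² + K). In particular the time aggregation of the objective error grows as O(√T). -/
/-!
The potential `Φ t = ‖x t - x*‖² + ‖λ t‖²` drops by at least `2ε (F (x t) - F x*) - ε² K` in each
step. Convexity of `L(·, λ t)`, together with `λ t ≥ 0` and feasibility of `x*`, bounds the
objective gap by `⟪∇ₓL, x t - x*⟫ - ⟪λ t, H (x t)⟫`; the projections onto `X` and onto the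
nonnegative orthant do not increase distances to `x*` and to `0`, so both updates are controlled
by expanding a square, in which the terms `⟪λ t, H (x t)⟫` cancel and the condition
`C₁ + δ²ε² ≤ δ` absorbs the `‖λ t‖²` terms. Telescoping with `Φ 1 = ‖x 1 - x*‖²` and
`T ε² = 1` gives the bound.
-/

open Finset RealInnerProductSpace

theorem ConvexOn.inner_gradient_sub_le {E : Type*} [NormedAddCommGroup E] [InnerProductSpace ℝ E]
    [CompleteSpace E] {f : E → ℝ} (hf : ConvexOn ℝ Set.univ f) (hfd : Differentiable ℝ f)
    (x y : E) : ⟪gradient f x, y - x⟫ ≤ f y - f x := by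
  let γ : ℝ →ᵃ[ℝ] E := AffineMap.lineMap x y
  have hφ : ConvexOn ℝ Set.univ (f ∘ γ) := by
    simpa only [Set.preimage_univ] using hf.comp_affineMap γ
  have hγ : HasDerivAt γ (y - x) 0 := by
    simpa [γ] using AffineMap.hasDerivAt_lineMap (a := x) (b := y) (x := (0 : ℝ))
  have hφd : HasDerivAt (f ∘ γ) ⟪gradient f x, y - x⟫ 0 := by
    have hfx : HasFDerivAt f (InnerProductSpace.toDual ℝ E (gradient f x)) (γ 0) := by
      simpa [γ] using (hfd x).hasGradientAt.hasFDerivAt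
    simpa using hfx.comp_hasDerivAt (0 : ℝ) hγ
  have := hφ.deriv_le_slope (Set.mem_univ 0) (Set.mem_univ 1) one_pos hφd.differentiableAt
  simpa [hφd.deriv, slope, γ] using this

theorem ConvexOn.fun_sum {E ι : Type*} [AddCommGroup E] [Module ℝ E] {s : Set E}
    (hs : Convex ℝ s) {t : Finset ι} {f : ι → E → ℝ} (hf : ∀ i ∈ t, ConvexOn ℝ s (f i)) :
    ConvexOn ℝ s fun x => ∑ i ∈ t, f i x := by
  classical
  induction t using Finset.induction_on with
  | empty => simpa using convexOn_const (0 : ℝ) hs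
  | insert i t hi ih =>
    simp only [Finset.sum_insert hi]
    exact (hf i (mem_insert_self i t)).add (ih fun j hj => hf j (mem_insert_of_mem hj))

theorem norm_sub_sq_le_of_nearest {E : Type*} [NormedAddCommGroup E]
    [InnerProductSpace ℝ E] {X : Set E} (hX : Convex ℝ X) {y p z : E} (hp : p ∈ X)
    (hmin : ∀ w ∈ X, ‖y - p‖ ≤ ‖y - w‖) (hz : z ∈ X) : ‖p - z‖ ^ 2 ≤ ‖y - z‖ ^ 2 := by
  have : Nonempty X := ⟨⟨p, hp⟩⟩
  have hinf : ‖y - p‖ = ⨅ w : X, ‖y - w‖ :=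
    le_antisymm (le_ciInf fun w => hmin w w.2)
      (ciInf_le ⟨0, Set.forall_mem_range.2 fun _ => norm_nonneg _⟩ (⟨p, hp⟩ : X))
  have hobtuse : ⟪y - p, z - p⟫ ≤ 0 :=
    (norm_eq_iInf_iff_real_inner_le_zero hX hp).1 hinf z hz
  have hexp : ‖y - z‖ ^ 2 = ‖y - p‖ ^ 2 - 2 * ⟪y - p, z - p⟫ + ‖p - z‖ ^ 2 := by
    rw [show y - z = (y - p) - (z - p) by abel, norm_sub_sq_real, norm_sub_rev z p]
  nlinarith [sq_nonneg ‖y - p‖]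

theorem EuclideanSpace.norm_le_of_posPart {ι : Type*} [Fintype ι] {v w : EuclideanSpace ℝ ι}
    (hw : ∀ i, w i = max (v i) 0) : ‖w‖ ≤ ‖v‖ := by
  rw [EuclideanSpace.norm_eq, EuclideanSpace.norm_eq]
  gcongr with i
  rw [hw]
  rcases le_total (v i) 0 with h | h <;> simp [h]

section Lagrangian

variable {E ι : Type*} [NormedAddCommGroup E] [InnerProductSpace ℝ E] [Fintype ι]

noncomputable def lagrangian (F : E → ℝ) (H : ι → E → ℝ) (c : ℝ) (lam : EuclideanSpace ℝ ι)
    (y : E) : ℝ :=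
  F y + (∑ e, lam e * H e y) - c / 2 * ‖lam‖ ^ 2

variable {F : E → ℝ} {H : ι → E → ℝ} {lam : EuclideanSpace ℝ ι}

theorem convexOn_lagrangian (hF : ConvexOn ℝ Set.univ F) (hH : ∀ e, ConvexOn ℝ Set.univ (H e))
    (hlam : ∀ e, 0 ≤ lam e) (c : ℝ) : ConvexOn ℝ Set.univ (lagrangian F H c lam) := by
  have hsum := ConvexOn.fun_sum convex_univ fun e (_ : e ∈ univ) => (hH e).smul (hlam e)
  exact ((hF.add hsum).add_const (-(c / 2 * ‖lam‖ ^ 2))).congr fun y _ => by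
    simp [lagrangian, sub_eq_add_neg]

theorem differentiable_lagrangian (hF : Differentiable ℝ F) (hH : ∀ e, Differentiable ℝ (H e))
    (c : ℝ) : Differentiable ℝ (lagrangian F H c lam) :=
  (hF.add (Differentiable.fun_sum fun e _ => (hH e).const_mul _)).sub_const _

theorem sub_le_inner_gradient_lagrangian [CompleteSpace E] (hF : ConvexOn ℝ Set.univ F)
    (hFd : Differentiable ℝ F) (hH : ∀ e, ConvexOn ℝ Set.univ (H e))
    (hHd : ∀ e, Differentiable ℝ (H e)) (hlam : ∀ e, 0 ≤ lam e) {xstar : E}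
    (hfeas : ∀ e, H e xstar ≤ 0) (c : ℝ) (x : E) :
    F x - F xstar ≤ ⟪gradient (lagrangian F H c lam) x, x - xstar⟫ - ∑ e, lam e * H e x := by
  have hgrad := (convexOn_lagrangian hF hH hlam c).inner_gradient_sub_le
    (differentiable_lagrangian hFd hHd c) x xstar
  have hslack : ∑ e, lam e * H e xstar ≤ 0 :=
    sum_nonpos fun e _ => mul_nonpos_of_nonneg_of_nonpos (hlam e) (hfeas e)
  rw [← neg_sub x xstar, inner_neg_right] at hgrad
  simp only [lagrangian] at hgrad
  linarith

end Lagrangian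

theorem norm_proj_step_sub_sq_le {E : Type*} [NormedAddCommGroup E] [InnerProductSpace ℝ E]
    {X : Set E} (hX : Convex ℝ X) {P : E → E} (hP : ∀ y, P y ∈ X ∧ ∀ w ∈ X, ‖y - P y‖ ≤ ‖y - w‖)
    {z : E} (hz : z ∈ X) (x g : E) (ε : ℝ) :
    ‖P (x - ε • g) - z‖ ^ 2 ≤ ‖x - z‖ ^ 2 - 2 * ε * ⟪g, x - z⟫ + ε ^ 2 * ‖g‖ ^ 2 := by
  calc ‖P (x - ε • g) - z‖ ^ 2 ≤ ‖(x - z) - ε • g‖ ^ 2 := by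
        rw [sub_right_comm]
        exact norm_sub_sq_le_of_nearest hX (hP _).1 (hP _).2 hz
    _ = ‖x - z‖ ^ 2 - 2 * ε * ⟪g, x - z⟫ + ε ^ 2 * ‖g‖ ^ 2 := by
        rw [norm_sub_sq_real, real_inner_smul_right, real_inner_comm, norm_smul, mul_pow,
          Real.norm_eq_abs, sq_abs]
        ring

theorem norm_posPart_step_sq_le {ι : Type*} [Fintype ι] {lam lam' g : EuclideanSpace ℝ ι} {ε : ℝ}
    (hlam' : ∀ e, lam' e = max ((lam + ε • g) e) 0) :
    ‖lam'‖ ^ 2 ≤ ‖lam‖ ^ 2 + 2 * ε * ⟪lam, g⟫ + ε ^ 2 * ‖g‖ ^ 2 := by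
  calc ‖lam'‖ ^ 2 ≤ ‖lam + ε • g‖ ^ 2 := by
        gcongr
        exact EuclideanSpace.norm_le_of_posPart hlam'
    _ = ‖lam‖ ^ 2 + 2 * ε * ⟪lam, g⟫ + ε ^ 2 * ‖g‖ ^ 2 := by
        rw [norm_add_sq_real, real_inner_smul_right, norm_smul, mul_pow, Real.norm_eq_abs, sq_abs]
        ring

theorem saddle_step_objective_gap_le {E ι : Type*} [NormedAddCommGroup E] [InnerProductSpace ℝ E]
    [CompleteSpace E] [Fintype ι] {X : Set E} (hX : Convex ℝ X) {P : E → E}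
    (hP : ∀ y, P y ∈ X ∧ ∀ w ∈ X, ‖y - P y‖ ≤ ‖y - w‖)
    {F : E → ℝ} (hF : ConvexOn ℝ Set.univ F) (hFd : Differentiable ℝ F)
    {H : ι → E → ℝ} (hH : ∀ e, ConvexOn ℝ Set.univ (H e)) (hHd : ∀ e, Differentiable ℝ (H e))
    {ε δ C₁ C₂ : ℝ} (hε : 0 ≤ ε) (hδ : 0 ≤ δ) (hδC : C₁ + δ ^ 2 * ε ^ 2 ≤ δ)
    {xstar : E} (hxstar : xstar ∈ X) (hfeas : ∀ e, H e xstar ≤ 0)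
    {x x' g : E} {lam lam' glam : EuclideanSpace ℝ ι} (hlam : ∀ e, 0 ≤ lam e)
    (hg : g = gradient (lagrangian F H (δ * ε) lam) x) (hglam : ∀ e, glam e = H e x - δ * ε * lam e)
    (hx' : x' = P (x - ε • g)) (hlam' : ∀ e, lam' e = max ((lam + ε • glam) e) 0)
    (hgb : ‖g‖ ^ 2 ≤ C₁ * (1 + ‖lam‖ ^ 2)) (hglamb : ‖glam‖ ^ 2 ≤ C₂ + δ ^ 2 * ε ^ 2 * ‖lam‖ ^ 2) :
    2 * ε * (F x - F xstar) ≤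
      (‖x - xstar‖ ^ 2 + ‖lam‖ ^ 2) - (‖x' - xstar‖ ^ 2 + ‖lam'‖ ^ 2) + ε ^ 2 * (C₁ + C₂) := by
  have hgap := sub_le_inner_gradient_lagrangian hF hFd hH hHd hlam hfeas (δ * ε) x
  rw [← hg] at hgap
  have hprimal := norm_proj_step_sub_sq_le hX hP hxstar x g ε
  rw [← hx'] at hprimal
  have hdual := norm_posPart_step_sq_le hlam'
  have hinner : ⟪lam, glam⟫ = ∑ e, lam e * H e x - δ * ε * ‖lam‖ ^ 2 := by
    simp only [PiLp.inner_apply, hglam, EuclideanSpace.real_norm_sq_eq, mul_sum,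
      ← sum_sub_distrib, RCLike.inner_apply, conj_trivial]
    exact sum_congr rfl fun e _ => by ring
  rw [hinner] at hdual
  have hlam2 : 0 ≤ ε ^ 2 * ‖lam‖ ^ 2 := by positivity
  linarith [mul_le_mul_of_nonneg_left hgap (by positivity : (0 : ℝ) ≤ 2 * ε),
    mul_le_mul_of_nonneg_left hgb (sq_nonneg ε), mul_le_mul_of_nonneg_left hglamb (sq_nonneg ε),
    mul_le_mul_of_nonneg_right hδC hlam2, mul_nonneg hδ hlam2]

theorem sum_le_of_potential_step {a Φ : ℕ → ℝ} {T : ℕ} {ε K : ℝ} (hT : 1 ≤ T)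
    (hεT : ε = 1 / √T) (hΦ : 0 ≤ Φ (T + 1))
    (hstep : ∀ t ∈ Icc 1 T, 2 * ε * a t ≤ Φ t - Φ (t + 1) + ε ^ 2 * K) :
    ∑ t ∈ Icc 1 T, a t ≤ √T / 2 * (Φ 1 + K) := by
  have hsqrt : √T * ε = 1 := by
    rw [hεT, mul_one_div_cancel (Real.sqrt_pos.2 (by exact_mod_cast hT)).ne']
  have hsum : 2 * ε * ∑ t ∈ Icc 1 T, a t ≤ Φ 1 - Φ (T + 1) + T * (ε ^ 2 * K) :=
    calc 2 * ε * ∑ t ∈ Icc 1 T, a t = ∑ t ∈ Icc 1 T, 2 * ε * a t := mul_sum _ _ _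
      _ ≤ ∑ t ∈ Icc 1 T, (Φ t - Φ (t + 1) + ε ^ 2 * K) := sum_le_sum hstep
      _ = Φ 1 - Φ (T + 1) + T * (ε ^ 2 * K) := by
        rw [sum_add_distrib, sum_const, Nat.card_Icc, nsmul_eq_mul, Nat.add_sub_cancel]
        congr 1
        rw [← neg_sub, ← sum_Icc_sub hT, ← sum_neg_distrib]
        simp only [neg_sub]
  calc ∑ t ∈ Icc 1 T, a t = √T / 2 * (2 * ε * ∑ t ∈ Icc 1 T, a t) := by
        linear_combination (-(∑ t ∈ Icc 1 T, a t)) * hsqrt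
    _ ≤ √T / 2 * (Φ 1 + K) := by
        gcongr
        have hTε : (T : ℝ) * (ε ^ 2 * K) = K := by
          rw [← mul_assoc, ← Real.sq_sqrt (Nat.cast_nonneg T), ← mul_pow, hsqrt, one_pow, one_mul]
        linarith

theorem stmt10_general
    {n M : ℕ} (T : ℕ) (hT : 1 ≤ T)
    (X : Set (EuclideanSpace ℝ (Fin n)))
    (hXconv : Convex ℝ X)
    (P : EuclideanSpace ℝ (Fin n) → EuclideanSpace ℝ (Fin n))
    (hP : ∀ y, P y ∈ X ∧ ∀ w ∈ X, ‖y - P y‖ ≤ ‖y - w‖)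
    (F : EuclideanSpace ℝ (Fin n) → ℝ)
    (hFconv : ConvexOn ℝ Set.univ F) (hFdiff : Differentiable ℝ F)
    (Hc : Fin M → EuclideanSpace ℝ (Fin n) → ℝ)
    (hHconv : ∀ e, ConvexOn ℝ Set.univ (Hc e))
    (hHdiff : ∀ e, Differentiable ℝ (Hc e))
    (Hvec : EuclideanSpace ℝ (Fin n) → EuclideanSpace ℝ (Fin M))
    (hHvec : ∀ y e, Hvec y e = Hc e y)
    (ε δ : ℝ) (hε : 0 < ε) (hδ : 0 < δ)
    (x : ℕ → EuclideanSpace ℝ (Fin n)) (lam : ℕ → EuclideanSpace ℝ (Fin M))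
    (hlam1 : lam 1 = 0)
    (gx : ℕ → EuclideanSpace ℝ (Fin n))
    (hgx : ∀ t, gx t =
      gradient (fun y => F y + (∑ e, lam t e * Hc e y) - (δ * ε / 2) * ‖lam t‖ ^ 2) (x t))
    (glam : ℕ → EuclideanSpace ℝ (Fin M))
    (hglam : ∀ t, glam t = Hvec (x t) - (δ * ε) • lam t)
    (hxrec : ∀ t, 1 ≤ t → t ≤ T → x (t + 1) = P (x t - ε • gx t))
    (hlamrec : ∀ t, 1 ≤ t → t ≤ T → ∀ e,
      lam (t + 1) e = max ((lam t + ε • glam t) e) 0)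
    (C₁ C₂ : ℝ)
    (hgxb : ∀ t, 1 ≤ t → t ≤ T → ‖gx t‖ ^ 2 ≤ C₁ * (1 + ‖lam t‖ ^ 2))
    (hglamb : ∀ t, 1 ≤ t → t ≤ T → ‖glam t‖ ^ 2 ≤ C₂ + δ ^ 2 * ε ^ 2 * ‖lam t‖ ^ 2)
    (K : ℝ) (hK : K = C₁ + C₂) (hδK : C₁ + δ ^ 2 * ε ^ 2 ≤ δ)
    (hεT : ε = 1 / Real.sqrt T)
    (xstar : EuclideanSpace ℝ (Fin n)) (hxstarX : xstar ∈ X)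
    (hxstarfeas : ∀ e, Hc e xstar ≤ 0) :
    ∑ t ∈ Finset.Icc 1 T, (F (x t) - F xstar)
      ≤ (Real.sqrt T / 2) * (‖x 1 - xstar‖ ^ 2 + K) := by
  have hlam_nonneg : ∀ t ∈ Icc 1 T, ∀ e, 0 ≤ lam t e := by
    intro t ht e
    cases t with
    | zero => simp at ht
    | succ s =>
      rcases Nat.eq_zero_or_pos s with rfl | hs
      · simp [hlam1]
      · rw [hlamrec s hs (by simp at ht; omega) e]
        exact le_max_right _ _
  refine (sum_le_of_potential_step (Φ := fun t => ‖x t - xstar‖ ^ 2 + ‖lam t‖ ^ 2)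
    (K := C₁ + C₂) hT hεT (by positivity) fun t ht => ?_).trans_eq (by simp [hlam1, hK])
  obtain ⟨ht1, htT⟩ := mem_Icc.1 ht
  exact saddle_step_objective_gap_le hXconv hP hFconv hFdiff hHconv hHdiff hε.le hδ.le hδK hxstarX
    hxstarfeas (hlam_nonneg t ht) (hgx t) (fun e => by simp [hglam, hHvec]) (hxrec t ht1 htT)
    (hlamrec t ht1 htT) (hgxb t ht1 htT) (hglamb t ht1 htT)

/-- Part (a) of Theorem 1 of the paper: with constant step-size `ε = 1/√T`, the
accumulated objective error of the saddle point iterates satisfies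
`∑_{t=1}^T (F(x_t) − F(x*)) ≤ (√T/2)(‖x₁ − x*‖² + K)`, i.e. it grows as `O(√T)`. -/
theorem stmt10
    {n M : ℕ} (T : ℕ) (hT : 1 ≤ T)
    (X : Set (EuclideanSpace ℝ (Fin n))) (hXne : X.Nonempty)
    (hXcomp : IsCompact X) (hXconv : Convex ℝ X)
    (P : EuclideanSpace ℝ (Fin n) → EuclideanSpace ℝ (Fin n))
    (hP : ∀ y, P y ∈ X ∧ ∀ w ∈ X, ‖y - P y‖ ≤ ‖y - w‖)
    (F : EuclideanSpace ℝ (Fin n) → ℝ)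
    (hFconv : ConvexOn ℝ Set.univ F) (hFdiff : Differentiable ℝ F)
    (Hc : Fin M → EuclideanSpace ℝ (Fin n) → ℝ)
    (hHconv : ∀ e, ConvexOn ℝ Set.univ (Hc e))
    (hHdiff : ∀ e, Differentiable ℝ (Hc e))
    (Hvec : EuclideanSpace ℝ (Fin n) → EuclideanSpace ℝ (Fin M))
    (hHvec : ∀ y e, Hvec y e = Hc e y)
    (ε δ : ℝ) (hε : 0 < ε) (hδ : 0 < δ)
    (x : ℕ → EuclideanSpace ℝ (Fin n)) (lam : ℕ → EuclideanSpace ℝ (Fin M))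
    (hx1 : x 1 ∈ X) (hlam1 : lam 1 = 0)
    (gx : ℕ → EuclideanSpace ℝ (Fin n))
    (hgx : ∀ t, gx t =
      gradient (fun y => F y + (∑ e, lam t e * Hc e y) - (δ * ε / 2) * ‖lam t‖ ^ 2) (x t))
    (glam : ℕ → EuclideanSpace ℝ (Fin M))
    (hglam : ∀ t, glam t = Hvec (x t) - (δ * ε) • lam t)
    (hxrec : ∀ t, 1 ≤ t → t ≤ T → x (t + 1) = P (x t - ε • gx t))
    (hlamrec : ∀ t, 1 ≤ t → t ≤ T → ∀ e,
      lam (t + 1) e = max ((lam t + ε • glam t) e) 0)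
    (C₁ C₂ : ℝ) (hC₁ : 0 ≤ C₁) (hC₂ : 0 ≤ C₂)
    (hgxb : ∀ t, 1 ≤ t → t ≤ T → ‖gx t‖ ^ 2 ≤ C₁ * (1 + ‖lam t‖ ^ 2))
    (hglamb : ∀ t, 1 ≤ t → t ≤ T → ‖glam t‖ ^ 2 ≤ C₂ + δ ^ 2 * ε ^ 2 * ‖lam t‖ ^ 2)
    (K : ℝ) (hK : K = C₁ + C₂) (hδK : C₁ + δ ^ 2 * ε ^ 2 ≤ δ)
    (hεT : ε = 1 / Real.sqrt T)
    (xstar : EuclideanSpace ℝ (Fin n)) (hxstarX : xstar ∈ X)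
    (hxstarfeas : ∀ e, Hc e xstar ≤ 0)
    (hxstaropt : ∀ y ∈ X, (∀ e, Hc e y ≤ 0) → F xstar ≤ F y) :
    ∑ t ∈ Finset.Icc 1 T, (F (x t) - F xstar)
      ≤ (Real.sqrt T / 2) * (‖x 1 - xstar‖ ^ 2 + K) :=
  stmt10_general T hT X hXconv P hP F hFconv hFdiff Hc hHconv hHdiff Hvec hHvec ε δ hε hδ x lam
    hlam1 gx hgx glam hglam hxrec hlamrec C₁ C₂ hgxb hglamb K hK hδK hεT xstar hxstarX hxstarfeas
end

section
/- In the deterministic saddle point setup below, with constant step-size ε = 1/√T, suppose additionally that F is L_f-Lipschitz and that ‖x‖ ≤ R for all x ∈ X, and let x̄_T = (1/T) Σ_{t=1}^T x_t be the running average of the primal iterates. Then the constraint violation of the averaged iterate satisfies Σ_{e=1}^M max(0, H_e(x̄_T)) ≤ (√M / T) · ( 2√T (δ + 1) ( (√T/2)(‖x_1 − x*‖² + K) + 2 T L_f R ) )^{1/2}, which is O(T^{−1/4}). -/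
/-!
Fix a multiplier `l ≥ 0`. One projected primal–dual step satisfies
`‖x_{t+1} - x*‖² + ‖λ_{t+1} - l‖² + 2ε ⟨l, H(x_t)⟩
  ≤ ‖x_t - x*‖² + ‖λ_t - l‖² + 2ε (F x* - F x_t) + ε² K + δε² ‖l‖²`:
both projections are nonexpansive towards `x* ∈ X` and `l ≥ 0`, the Lagrangian is convex in `x`
and `x*` is feasible, and the `‖λ_t‖²` terms cancel because `C₁ + δ²ε² ≤ δ`. Telescoping over
`t ≤ T`, bounding `F x* - F x_t ≤ 2 L_f R` and using `Tε² = 1` gives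
`2ε Σ_t ⟨l, H(x_t)⟩ ≤ B + (1 + δ) ‖l‖²` with `B = ‖x₁ - x*‖² + K + 4εT L_f R`. By Jensen the left
side is at least `2εT ⟨l, H(x̄)⟩`; taking `l = εT/(1 + δ) · [H(x̄)]₊` yields
`T ‖[H(x̄)]₊‖² ≤ (1 + δ) B`, and Cauchy–Schwarz turns this into the bound on `Σₑ [Hₑ(x̄)]₊`.
-/

open Set Finset RealInnerProductSpace

theorem max_zero_mul_self_eq (a : ℝ) : max 0 a * a = max 0 a ^ 2 := by
  rcases le_total a 0 with ha | ha
  · simp [max_eq_left ha]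
  · rw [max_eq_right ha, sq]

theorem forall_of_one_of_succ {p : ℕ → Prop} {T : ℕ} (h1 : p 1)
    (hsucc : ∀ t, 1 ≤ t → t ≤ T → p (t + 1)) : ∀ t, 1 ≤ t → t ≤ T + 1 → p t := by
  rintro (_ | _ | t) ht htT
  exacts [absurd ht (by omega), h1, hsucc (t + 1) (by omega) (by omega)]

theorem add_sum_Icc_le_of_step {a b : ℕ → ℝ} {c : ℝ} {T : ℕ}
    (h : ∀ t, 1 ≤ t → t ≤ T → a (t + 1) + b t ≤ a t + c) :
    a (T + 1) + ∑ t ∈ Icc 1 T, b t ≤ a 1 + T * c := by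
  induction T with
  | zero => simp
  | succ T ih =>
    have hT := h (T + 1) (by omega) le_rfl
    have ih' := ih fun t h1 h2 => h t h1 (by omega)
    rw [sum_Icc_succ_top (by omega)]
    push_cast
    linarith

theorem eq_of_abs_sub_le_mul_norm_of_neg {E : Type*} [NormedAddCommGroup E] {f : E → ℝ}
    {L : ℝ} (hL : L < 0) {y z : E} (h : |f y - f z| ≤ L * ‖y - z‖) : y = z := by
  by_contra hne
  have hpos : 0 < ‖y - z‖ := norm_pos_iff.2 (sub_ne_zero.2 hne)
  nlinarith [abs_nonneg (f y - f z)]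

theorem sub_le_two_mul_mul_of_abs_sub_le {E : Type*} [SeminormedAddCommGroup E] {f : E → ℝ}
    {L R : ℝ} (hL : 0 ≤ L) {y z : E} (h : |f y - f z| ≤ L * ‖y - z‖) (hy : ‖y‖ ≤ R)
    (hz : ‖z‖ ≤ R) : f y - f z ≤ 2 * L * R :=
  calc f y - f z ≤ L * ‖y - z‖ := (le_abs_self _).trans h
    _ ≤ L * (R + R) := by gcongr; exact (norm_sub_le y z).trans (add_le_add hy hz)
    _ = 2 * L * R := by ring

theorem ConvexOn.card_mul_map_average_le {E ι : Type*} [AddCommGroup E] [Module ℝ E]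
    {f : E → ℝ} (hf : ConvexOn ℝ univ f) {s : Finset ι} (hs : s.Nonempty) (x : ι → E) :
    #s * f ((1 / (#s : ℝ)) • ∑ i ∈ s, x i) ≤ ∑ i ∈ s, f (x i) := by
  have hcard : (0 : ℝ) < #s := by exact_mod_cast hs.card_pos
  have hjensen := hf.map_sum_le (t := s) (w := fun _ => 1 / (#s : ℝ)) (p := x)
    (fun _ _ => by positivity) (by simp [hcard.ne']) (fun _ _ => mem_univ _)
  rw [← smul_sum, ← smul_sum, smul_eq_mul] at hjensen
  calc (#s : ℝ) * f ((1 / (#s : ℝ)) • ∑ i ∈ s, x i)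
      ≤ #s * (1 / #s * ∑ i ∈ s, f (x i)) := by gcongr
    _ = ∑ i ∈ s, f (x i) := by field_simp

section Hilbert

variable {E : Type*} [NormedAddCommGroup E] [InnerProductSpace ℝ E]

theorem ConvexOn.inner_gradient_le_sub [CompleteSpace E] {f : E → ℝ}
    (hf : ConvexOn ℝ univ f) (hfd : Differentiable ℝ f) (a b : E) :
    ⟪gradient f a, b - a⟫ ≤ f b - f a := by
  have hline : HasDerivAt (f ∘ AffineMap.lineMap (k := ℝ) a b) ⟪gradient f a, b - a⟫ 0 := by
    simpa only [InnerProductSpace.toDual_apply_apply] using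
      (hfd a).hasGradientAt.hasFDerivAt.comp_hasDerivAt_of_eq (0 : ℝ)
        AffineMap.hasDerivAt_lineMap (AffineMap.lineMap_apply_zero a b).symm
  simpa [slope_def_field] using
    (hf.comp_affineMap (AffineMap.lineMap a b)).le_slope_of_hasDerivAt
      (mem_univ 0) (mem_univ 1) one_pos hline

theorem norm_sub_le_of_isNearest {X : Set E} (hX : Convex ℝ X) {u p w : E} (hp : p ∈ X)
    (hnear : ∀ y ∈ X, ‖u - p‖ ≤ ‖u - y‖) (hw : w ∈ X) : ‖p - w‖ ≤ ‖u - w‖ := by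
  have hinf : ‖u - p‖ = ⨅ y : X, ‖u - y‖ := by
    have : Nonempty X := ⟨⟨p, hp⟩⟩
    have hbdd : BddBelow (range fun y : X => ‖u - y‖) :=
      ⟨0, forall_mem_range.2 fun _ => norm_nonneg _⟩
    exact le_antisymm (le_ciInf fun y => hnear y y.2) (ciInf_le hbdd ⟨p, hp⟩)
  have hvar : ⟪u - p, w - p⟫ ≤ 0 := (norm_eq_iInf_iff_real_inner_le_zero hX hp).mp hinf w hw
  have hsplit : ‖u - w‖ ^ 2 = ‖u - p‖ ^ 2 - 2 * ⟪u - p, w - p⟫ + ‖p - w‖ ^ 2 := by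
    rw [show u - w = (u - p) - (w - p) by abel, norm_sub_sq_real, norm_sub_rev w p]
  exact pow_le_pow_iff_left₀ (norm_nonneg _) (norm_nonneg _) two_ne_zero |>.mp
    (by nlinarith [sq_nonneg ‖u - p‖])

theorem norm_sub_smul_sub_sq (x z g : E) (ε : ℝ) :
    ‖x - ε • g - z‖ ^ 2 = ‖x - z‖ ^ 2 - 2 * ε * ⟪g, x - z⟫ + ε ^ 2 * ‖g‖ ^ 2 := by
  rw [sub_right_comm, norm_sub_sq_real, real_inner_smul_right, real_inner_comm, norm_smul,
    mul_pow, Real.norm_eq_abs, sq_abs]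
  ring

theorem norm_proj_sub_smul_sub_sq_le {X : Set E} (hX : Convex ℝ X) {P : E → E}
    (hP : ∀ y, P y ∈ X ∧ ∀ w ∈ X, ‖y - P y‖ ≤ ‖y - w‖) (x g : E) (ε : ℝ) {z : E}
    (hz : z ∈ X) :
    ‖P (x - ε • g) - z‖ ^ 2 ≤ ‖x - z‖ ^ 2 - 2 * ε * ⟪g, x - z⟫ + ε ^ 2 * ‖g‖ ^ 2 := by
  rw [← norm_sub_smul_sub_sq]
  gcongr
  exact norm_sub_le_of_isNearest hX (hP _).1 (hP _).2 hz

theorem inner_sub_smul_sub_le {a : ℝ} (ha : 0 ≤ a) (h μ l : E) :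
    ⟪h - a • μ, μ - l⟫ ≤ ⟪h, μ⟫ - ⟪h, l⟫ - a / 2 * ‖μ‖ ^ 2 + a / 2 * ‖l‖ ^ 2 := by
  have hsq := norm_sub_sq_real μ l
  rw [inner_sub_left, inner_sub_right, inner_sub_right, real_inner_smul_left,
    real_inner_smul_left, real_inner_self_eq_norm_sq]
  nlinarith [mul_nonneg ha (sq_nonneg ‖μ - l‖)]

theorem lagrangian_sub_le_inner_gradient [CompleteSpace E] {ι : Type*} [Fintype ι] {F : E → ℝ}
    (hF : ConvexOn ℝ univ F) (hFd : Differentiable ℝ F) {H : ι → E → ℝ}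
    (hH : ∀ e, ConvexOn ℝ univ (H e)) (hHd : ∀ e, Differentiable ℝ (H e)) {μ : ι → ℝ}
    (hμ : ∀ e, 0 ≤ μ e) (c : ℝ) (x : E) {z : E} (hz : ∀ e, H e z ≤ 0) :
    F x + ∑ e, μ e * H e x - F z
      ≤ ⟪gradient (fun y => F y + ∑ e, μ e * H e y - c) x, x - z⟫ := by
  have hsum : ConvexOn ℝ univ (∑ e, fun y => μ e * H e y) :=
    sum_induction _ (ConvexOn ℝ univ) (fun _ _ => ConvexOn.add)
      (convexOn_const 0 convex_univ) fun e _ => (hH e).smul (hμ e)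
  rw [sum_fn] at hsum
  have hL : ConvexOn ℝ univ (fun y => F y + ∑ e, μ e * H e y - c) :=
    (hF.add hsum).sub (concaveOn_const c convex_univ)
  have hgrad := hL.inner_gradient_le_sub (by fun_prop) x z
  have hz' : ∑ e, μ e * H e z ≤ 0 :=
    sum_nonpos fun e _ => mul_nonpos_of_nonneg_of_nonpos (hμ e) (hz e)
  rw [← neg_sub z x, inner_neg_right]
  linarith

end Hilbert

section Euclidean

variable {ι : Type*} [Fintype ι]

theorem sum_le_sqrt_card_mul_norm (v : EuclideanSpace ℝ ι) :
    ∑ e, v e ≤ √(Fintype.card ι) * ‖v‖ := by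
  have hcs : (∑ e, v e) ^ 2 ≤ Fintype.card ι * ‖v‖ ^ 2 := by
    simpa [EuclideanSpace.real_norm_sq_eq] using sq_sum_le_card_mul_sum_sq (s := univ) (f := v)
  calc ∑ e, v e ≤ |∑ e, v e| := le_abs_self _
    _ ≤ √(Fintype.card ι * ‖v‖ ^ 2) := Real.abs_le_sqrt hcs
    _ = √(Fintype.card ι) * ‖v‖ := by
      rw [Real.sqrt_mul (Nat.cast_nonneg _), Real.sqrt_sq (norm_nonneg _)]

theorem norm_posPart_sub_sq_le {v w l : EuclideanSpace ℝ ι}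
    (hw : ∀ e, w e = max (v e) 0) (hl : ∀ e, 0 ≤ l e) : ‖w - l‖ ^ 2 ≤ ‖v - l‖ ^ 2 := by
  simp only [EuclideanSpace.real_norm_sq_eq, PiLp.sub_apply]
  refine sum_le_sum fun e _ => ?_
  rw [sq_le_sq, hw]
  simpa only [max_eq_left (hl e)] using abs_max_sub_max_le_abs (v e) (l e) 0

theorem norm_posPart_add_smul_sub_sq_le {μ μ' l g : EuclideanSpace ℝ ι} {ε : ℝ}
    (hμ' : ∀ e, μ' e = max ((μ + ε • g) e) 0) (hl : ∀ e, 0 ≤ l e) :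
    ‖μ' - l‖ ^ 2 ≤ ‖μ - l‖ ^ 2 + 2 * ε * ⟪g, μ - l⟫ + ε ^ 2 * ‖g‖ ^ 2 := by
  calc ‖μ' - l‖ ^ 2 ≤ ‖μ + ε • g - l‖ ^ 2 := norm_posPart_sub_sq_le hμ' hl
    _ = _ := by simpa [sub_neg_eq_add, neg_smul] using norm_sub_smul_sub_sq μ l g (-ε)

end Euclidean

theorem primal_dual_step_le {E ι : Type*} [NormedAddCommGroup E] [InnerProductSpace ℝ E]
    [CompleteSpace E] [Fintype ι] {X : Set E} (hX : Convex ℝ X) {P : E → E}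
    (hP : ∀ y, P y ∈ X ∧ ∀ w ∈ X, ‖y - P y‖ ≤ ‖y - w‖)
    {F : E → ℝ} (hF : ConvexOn ℝ univ F) (hFd : Differentiable ℝ F)
    {H : ι → E → ℝ} (hH : ∀ e, ConvexOn ℝ univ (H e)) (hHd : ∀ e, Differentiable ℝ (H e))
    {Hvec : E → EuclideanSpace ℝ ι} (hHvec : ∀ y e, Hvec y e = H e y)
    {δ ε C₁ C₂ : ℝ} (hδ : 0 ≤ δ) (hε : 0 ≤ ε) (hδC : C₁ + δ ^ 2 * ε ^ 2 ≤ δ)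
    {x x' z gx : E} {μ μ' l gμ : EuclideanSpace ℝ ι}
    (hμ : ∀ e, 0 ≤ μ e) (hl : ∀ e, 0 ≤ l e) (hz : z ∈ X) (hzH : ∀ e, H e z ≤ 0)
    (hgx : gx = gradient (fun y => F y + (∑ e, μ e * H e y) - (δ * ε / 2) * ‖μ‖ ^ 2) x)
    (hgμ : gμ = Hvec x - (δ * ε) • μ)
    (hx' : x' = P (x - ε • gx)) (hμ' : ∀ e, μ' e = max ((μ + ε • gμ) e) 0)
    (hgx_le : ‖gx‖ ^ 2 ≤ C₁ * (1 + ‖μ‖ ^ 2))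
    (hgμ_le : ‖gμ‖ ^ 2 ≤ C₂ + δ ^ 2 * ε ^ 2 * ‖μ‖ ^ 2) :
    ‖x' - z‖ ^ 2 + ‖μ' - l‖ ^ 2 + 2 * ε * ∑ e, l e * H e x
      ≤ ‖x - z‖ ^ 2 + ‖μ - l‖ ^ 2
        + (2 * ε * (F z - F x) + ε ^ 2 * (C₁ + C₂) + δ * ε ^ 2 * ‖l‖ ^ 2) := by
  have hprimal := norm_proj_sub_smul_sub_sq_le hX hP x gx ε hz
  have hdual := norm_posPart_add_smul_sub_sq_le hμ' hl
  have hgrad := lagrangian_sub_le_inner_gradient hF hFd hH hHd hμ ((δ * ε / 2) * ‖μ‖ ^ 2) x hzH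
  have hdual_inner := inner_sub_smul_sub_le (by positivity : 0 ≤ δ * ε) (Hvec x) μ l
  have hinner : ∀ ν : EuclideanSpace ℝ ι, ⟪Hvec x, ν⟫ = ∑ e, ν e * H e x := fun ν => by
    simp [PiLp.inner_apply, hHvec]
  rw [← hgx] at hgrad
  rw [← hgμ, hinner, hinner] at hdual_inner
  rw [← hx'] at hprimal
  have hgsq : ‖gx‖ ^ 2 + ‖gμ‖ ^ 2 ≤ C₁ + C₂ + δ * ‖μ‖ ^ 2 := by
    nlinarith [mul_le_mul_of_nonneg_right hδC (sq_nonneg ‖μ‖)]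
  linarith [mul_le_mul_of_nonneg_left hgrad (by positivity : 0 ≤ 2 * ε),
    mul_le_mul_of_nonneg_left hdual_inner (by positivity : 0 ≤ 2 * ε),
    mul_le_mul_of_nonneg_left hgsq (sq_nonneg ε)]

theorem sum_max_zero_le_of_forall_multiplier {E ι : Type*} [AddCommGroup E] [Module ℝ E]
    [Fintype ι] {H : ι → E → ℝ} (hH : ∀ e, ConvexOn ℝ univ (H e)) {T : ℕ} (x : ℕ → E)
    {ε ρ B : ℝ} (hε : 0 ≤ ε) (hTε : T * ε ^ 2 = 1) (hρ : 0 < ρ)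
    (hmult : ∀ l : EuclideanSpace ℝ ι, (∀ e, 0 ≤ l e) →
      2 * ε * ∑ t ∈ Icc 1 T, ∑ e, l e * H e (x t) ≤ B + ρ * ‖l‖ ^ 2) :
    ∑ e, max 0 (H e ((1 / (T : ℝ)) • ∑ t ∈ Icc 1 T, x t))
      ≤ √(Fintype.card ι) / T * √(T * ρ * B) := by
  set xbar := (1 / (T : ℝ)) • ∑ t ∈ Icc 1 T, x t
  have hT : 1 ≤ T := Nat.one_le_iff_ne_zero.2 fun h0 => by simp [h0] at hTε
  have hT0 : (0 : ℝ) < T := by exact_mod_cast hT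
  set h : EuclideanSpace ℝ ι := WithLp.toLp 2 fun e => max 0 (H e xbar)
  have hh0 : ∀ e, 0 ≤ h e := fun e => le_max_left _ _
  have hjensen : T * ‖h‖ ^ 2 ≤ ∑ t ∈ Icc 1 T, ∑ e, h e * H e (x t) := by
    rw [sum_comm, EuclideanSpace.real_norm_sq_eq, mul_sum]
    refine sum_le_sum fun e _ => ?_
    have hav := (hH e).card_mul_map_average_le (nonempty_Icc.2 hT) x
    simp only [Nat.card_Icc, add_tsub_cancel_right] at hav
    calc (T : ℝ) * h e ^ 2 = h e * (T * H e xbar) := by rw [← max_zero_mul_self_eq]; ring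
      _ ≤ h e * ∑ t ∈ Icc 1 T, H e (x t) := by gcongr
      _ = ∑ t ∈ Icc 1 T, h e * H e (x t) := mul_sum _ _ _
  have hkey : T * ‖h‖ ^ 2 ≤ ρ * B := by
    -- `c = εT/ρ` maximises `2εcT‖h‖² - ρc²‖h‖²`, which `hmult` at `c • h` bounds by `B`
    set c := ε * T / ρ
    have hc : 0 ≤ c := by positivity
    have hcρ : c * ρ = ε * T := div_mul_cancel₀ _ hρ.ne'
    clear_value c
    have hl := hmult (c • h) fun e => mul_nonneg hc (hh0 e)
    simp only [PiLp.smul_apply, smul_eq_mul, mul_assoc, ← mul_sum, norm_smul, mul_pow,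
      Real.norm_eq_abs, sq_abs] at hl
    set A := ∑ t ∈ Icc 1 T, ∑ e, h e * H e (x t)
    linear_combination ρ * hl + 2 * hjensen - (2 * ε * A - (c * ρ + ε * T) * ‖h‖ ^ 2) * hcρ
      - (2 * A - T * ‖h‖ ^ 2) * hTε
  have hnorm : ‖h‖ ≤ √(T * ρ * B) / T := by
    have hρB : 0 ≤ ρ * B := hkey.trans' (by positivity)
    rw [le_div_iff₀ hT0, Real.le_sqrt (by positivity) (by rw [mul_assoc]; positivity)]
    nlinarith
  calc ∑ e, max 0 (H e xbar) = ∑ e, h e := rfl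
    _ ≤ √(Fintype.card ι) * ‖h‖ := sum_le_sqrt_card_mul_norm h
    _ ≤ √(Fintype.card ι) * (√(T * ρ * B) / T) := by gcongr
    _ = √(Fintype.card ι) / T * √(T * ρ * B) := by ring

theorem stmt13_general
    {n M : ℕ} (T : ℕ) (hT : 1 ≤ T)
    (X : Set (EuclideanSpace ℝ (Fin n)))
    (hXconv : Convex ℝ X)
    (P : EuclideanSpace ℝ (Fin n) → EuclideanSpace ℝ (Fin n))
    (hP : ∀ y, P y ∈ X ∧ ∀ w ∈ X, ‖y - P y‖ ≤ ‖y - w‖)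
    (F : EuclideanSpace ℝ (Fin n) → ℝ)
    (hFconv : ConvexOn ℝ Set.univ F) (hFdiff : Differentiable ℝ F)
    (Hc : Fin M → EuclideanSpace ℝ (Fin n) → ℝ)
    (hHconv : ∀ e, ConvexOn ℝ Set.univ (Hc e))
    (hHdiff : ∀ e, Differentiable ℝ (Hc e))
    (Hvec : EuclideanSpace ℝ (Fin n) → EuclideanSpace ℝ (Fin M))
    (hHvec : ∀ y e, Hvec y e = Hc e y)
    (ε δ : ℝ) (hδ : 0 < δ)
    (x : ℕ → EuclideanSpace ℝ (Fin n)) (lam : ℕ → EuclideanSpace ℝ (Fin M))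
    (hx1 : x 1 ∈ X) (hlam1 : lam 1 = 0)
    (gx : ℕ → EuclideanSpace ℝ (Fin n))
    (hgx : ∀ t, gx t =
      gradient (fun y => F y + (∑ e, lam t e * Hc e y) - (δ * ε / 2) * ‖lam t‖ ^ 2) (x t))
    (glam : ℕ → EuclideanSpace ℝ (Fin M))
    (hglam : ∀ t, glam t = Hvec (x t) - (δ * ε) • lam t)
    (hxrec : ∀ t, 1 ≤ t → t ≤ T → x (t + 1) = P (x t - ε • gx t))
    (hlamrec : ∀ t, 1 ≤ t → t ≤ T → ∀ e,
      lam (t + 1) e = max ((lam t + ε • glam t) e) 0)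
    (C₁ C₂ : ℝ)
    (hgxb : ∀ t, 1 ≤ t → t ≤ T → ‖gx t‖ ^ 2 ≤ C₁ * (1 + ‖lam t‖ ^ 2))
    (hglamb : ∀ t, 1 ≤ t → t ≤ T → ‖glam t‖ ^ 2 ≤ C₂ + δ ^ 2 * ε ^ 2 * ‖lam t‖ ^ 2)
    (K : ℝ) (hK : K = C₁ + C₂) (hδK : C₁ + δ ^ 2 * ε ^ 2 ≤ δ)
    (hεT : ε = 1 / Real.sqrt T)
    (xstar : EuclideanSpace ℝ (Fin n)) (hxstarX : xstar ∈ X)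
    (hxstarfeas : ∀ e, Hc e xstar ≤ 0)
    (Lf : ℝ) (hLf : ∀ y z, |F y - F z| ≤ Lf * ‖y - z‖)
    (R : ℝ) (hR : ∀ y ∈ X, ‖y‖ ≤ R)
    (xbar : EuclideanSpace ℝ (Fin n))
    (hxbar : xbar = (1 / (T : ℝ)) • ∑ t ∈ Finset.Icc 1 T, x t) :
    ∑ e, max 0 (Hc e xbar)
      ≤ (Real.sqrt M / T) *
        Real.sqrt (2 * Real.sqrt T * (δ + 1) *
          ((Real.sqrt T / 2) * (‖x 1 - xstar‖ ^ 2 + K) + 2 * T * Lf * R)) := by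
  rcases lt_or_ge Lf 0 with hLf0 | hLf0
  · rw [eq_of_abs_sub_le_mul_norm_of_neg hLf0 (hLf xbar xstar)]
    simp only [max_eq_left (hxstarfeas _), sum_const_zero]
    positivity
  have hT0 : (0 : ℝ) < T := by exact_mod_cast hT
  have hε : 0 ≤ ε := hεT ▸ by positivity
  have hTε : (T : ℝ) * ε ^ 2 = 1 := by
    rw [hεT, div_pow, Real.sq_sqrt hT0.le]; field_simp
  have hxX := forall_of_one_of_succ (p := (x · ∈ X)) hx1 fun t h1 hle => hxrec t h1 hle ▸ (hP _).1
  have hlam := forall_of_one_of_succ (p := fun t => ∀ e, 0 ≤ lam t e) (by simp [hlam1])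
    fun t h1 hle e => hlamrec t h1 hle e ▸ le_max_right _ _
  have hmult : ∀ l : EuclideanSpace ℝ (Fin M), (∀ e, 0 ≤ l e) →
      2 * ε * ∑ t ∈ Icc 1 T, ∑ e, l e * Hc e (x t)
        ≤ (‖x 1 - xstar‖ ^ 2 + K + 4 * ε * T * Lf * R) + (1 + δ) * ‖l‖ ^ 2 := by
    intro l hl
    have htele := add_sum_Icc_le_of_step (a := fun t => ‖x t - xstar‖ ^ 2 + ‖lam t - l‖ ^ 2)
      (b := fun t => 2 * ε * ∑ e, l e * Hc e (x t))
      (c := 2 * ε * (2 * Lf * R) + ε ^ 2 * (C₁ + C₂) + δ * ε ^ 2 * ‖l‖ ^ 2) fun t h1 hle =>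
        (primal_dual_step_le hXconv hP hFconv hFdiff hHconv hHdiff hHvec hδ.le hε hδK
          (hlam t h1 (by omega)) hl hxstarX hxstarfeas (hgx t) (hglam t) (hxrec t h1 hle)
          (hlamrec t h1 hle) (hgxb t h1 hle) (hglamb t h1 hle)).trans <| by
        gcongr
        exact sub_le_two_mul_mul_of_abs_sub_le hLf0 (hLf _ _) (hR _ hxstarX)
          (hR _ (hxX t h1 (by omega)))
    rw [← mul_sum, hlam1, zero_sub, norm_neg] at htele
    linear_combination htele + (K + δ * ‖l‖ ^ 2) * hTε - T * ε ^ 2 * hK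
      + sq_nonneg ‖x (T + 1) - xstar‖ + sq_nonneg ‖lam (T + 1) - l‖
  have hS : (T : ℝ) * (1 + δ) * (‖x 1 - xstar‖ ^ 2 + K + 4 * ε * T * Lf * R)
      = 2 * √T * (δ + 1) * ((√T / 2) * (‖x 1 - xstar‖ ^ 2 + K) + 2 * T * Lf * R) := by
    have hs : √T ^ 2 = T := Real.sq_sqrt hT0.le
    have hεs : ε * √T = 1 := by rw [hεT, one_div_mul_cancel (Real.sqrt_pos.2 hT0).ne']
    linear_combination 4 * (δ + 1) * T * Lf * R * √T * hεs
      - ((δ + 1) * (‖x 1 - xstar‖ ^ 2 + K) + 4 * (δ + 1) * T * Lf * R * ε) * hs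
  rw [hxbar, ← hS]
  simpa using sum_max_zero_le_of_forall_multiplier hHconv x hε hTε (by positivity) hmult

/-- Second part of Corollary 1 of the paper: with constant step-size `ε = 1/√T`,
`F` `L_f`-Lipschitz and `X` bounded by `R`, the constraint violation of the running
average `x̄_T = (1/T) ∑_{t=1}^T x_t` satisfies
`∑ₑ [Hₑ(x̄_T)]₊ ≤ (√M/T)(2√T(δ+1)((√T/2)(‖x₁−x*‖²+K) + 2TL_fR))^{1/2}`,
which is `O(T^{−1/4})`. -/
theorem stmt13
    {n M : ℕ} (T : ℕ) (hT : 1 ≤ T)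
    (X : Set (EuclideanSpace ℝ (Fin n))) (hXne : X.Nonempty)
    (hXcomp : IsCompact X) (hXconv : Convex ℝ X)
    (P : EuclideanSpace ℝ (Fin n) → EuclideanSpace ℝ (Fin n))
    (hP : ∀ y, P y ∈ X ∧ ∀ w ∈ X, ‖y - P y‖ ≤ ‖y - w‖)
    (F : EuclideanSpace ℝ (Fin n) → ℝ)
    (hFconv : ConvexOn ℝ Set.univ F) (hFdiff : Differentiable ℝ F)
    (Hc : Fin M → EuclideanSpace ℝ (Fin n) → ℝ)
    (hHconv : ∀ e, ConvexOn ℝ Set.univ (Hc e))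
    (hHdiff : ∀ e, Differentiable ℝ (Hc e))
    (Hvec : EuclideanSpace ℝ (Fin n) → EuclideanSpace ℝ (Fin M))
    (hHvec : ∀ y e, Hvec y e = Hc e y)
    (ε δ : ℝ) (hε : 0 < ε) (hδ : 0 < δ)
    (x : ℕ → EuclideanSpace ℝ (Fin n)) (lam : ℕ → EuclideanSpace ℝ (Fin M))
    (hx1 : x 1 ∈ X) (hlam1 : lam 1 = 0)
    (gx : ℕ → EuclideanSpace ℝ (Fin n))
    (hgx : ∀ t, gx t =
      gradient (fun y => F y + (∑ e, lam t e * Hc e y) - (δ * ε / 2) * ‖lam t‖ ^ 2) (x t))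
    (glam : ℕ → EuclideanSpace ℝ (Fin M))
    (hglam : ∀ t, glam t = Hvec (x t) - (δ * ε) • lam t)
    (hxrec : ∀ t, 1 ≤ t → t ≤ T → x (t + 1) = P (x t - ε • gx t))
    (hlamrec : ∀ t, 1 ≤ t → t ≤ T → ∀ e,
      lam (t + 1) e = max ((lam t + ε • glam t) e) 0)
    (C₁ C₂ : ℝ) (hC₁ : 0 ≤ C₁) (hC₂ : 0 ≤ C₂)
    (hgxb : ∀ t, 1 ≤ t → t ≤ T → ‖gx t‖ ^ 2 ≤ C₁ * (1 + ‖lam t‖ ^ 2))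
    (hglamb : ∀ t, 1 ≤ t → t ≤ T → ‖glam t‖ ^ 2 ≤ C₂ + δ ^ 2 * ε ^ 2 * ‖lam t‖ ^ 2)
    (K : ℝ) (hK : K = C₁ + C₂) (hδK : C₁ + δ ^ 2 * ε ^ 2 ≤ δ)
    (hεT : ε = 1 / Real.sqrt T)
    (xstar : EuclideanSpace ℝ (Fin n)) (hxstarX : xstar ∈ X)
    (hxstarfeas : ∀ e, Hc e xstar ≤ 0)
    (hxstaropt : ∀ y ∈ X, (∀ e, Hc e y ≤ 0) → F xstar ≤ F y)
    (Lf : ℝ) (hLf : ∀ y z, |F y - F z| ≤ Lf * ‖y - z‖)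
    (R : ℝ) (hR : ∀ y ∈ X, ‖y‖ ≤ R)
    (xbar : EuclideanSpace ℝ (Fin n))
    (hxbar : xbar = (1 / (T : ℝ)) • ∑ t ∈ Finset.Icc 1 T, x t) :
    ∑ e, max 0 (Hc e xbar)
      ≤ (Real.sqrt M / T) *
        Real.sqrt (2 * Real.sqrt T * (δ + 1) *
          ((Real.sqrt T / 2) * (‖x 1 - xstar‖ ^ 2 + K) + 2 * T * Lf * R)) :=
  stmt13_general T hT X hXconv P hP F hFconv hFdiff Hc hHconv hHdiff Hvec hHvec ε δ hδ x lam hx1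
    hlam1 gx hgx glam hglam hxrec hlamrec C₁ C₂ hgxb hglamb K hK hδK hεT xstar hxstarX hxstarfeas Lf
    hLf R hR xbar hxbar
end
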